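/- arXiv:2509.22765 — 3 statements merged into one kernel-verified Lean document; each statement's English description precedes it below -/
import Mathlib

section
/- With W_n as in the example (W_n φ_k = (1/k)φ_k for k ≠ 1, n; W_n φ_1 = φ_1 + (1/n)φ_n; W_n φ_n = (1/n)φ_1 + (2/n²)φ_n) and M the closed span of {φ_k : k ≥ 2}, the closure of W_n(M) equals the orthogonal complement of the vector ψ_n = φ_1 − (n/2) φ_n. -/
open ContinuousLinearMap Submodule Filter
open scoped InnerProductSpace Topology

set_option synthInstance.maxHeartbeats 1000000
set_option maxHeartbeats 1000000

/-- For `n ≥ 2` and `W_n` as in the example, the closure of `W_n(M)`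
(`M` the closed span of `{φ_k : k ≥ 2}`) equals the orthogonal complement of
`ψ_n = φ_1 − (n/2) φ_n`. -/
theorem stmt_6
    {F : Type*} [NormedAddCommGroup F] [InnerProductSpace ℂ F] [CompleteSpace F]
    (φ : HilbertBasis ℕ+ ℂ F) (n : ℕ+) (hn : 2 ≤ n) (Wn : F →L[ℂ] F)
    (hWn : ∀ k : ℕ+, k ≠ 1 → k ≠ n → Wn (φ k) = (1 / ((k:ℕ):ℂ)) • φ k)
    (hWn1 : Wn (φ 1) = φ 1 + (1 / ((n:ℕ):ℂ)) • φ n)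
    (hWnn : Wn (φ n) = (1 / ((n:ℕ):ℂ)) • φ 1 + (2 / ((n:ℕ):ℂ)^2) • φ n) :
    let M : Submodule ℂ F :=
      (Submodule.span ℂ {x | ∃ k : ℕ+, 2 ≤ k ∧ x = φ k}).topologicalClosure
    let ψ : F := φ 1 - (((n:ℕ):ℂ) / 2) • φ n
    (M.map (Wn : F →ₗ[ℂ] F)).topologicalClosure = (ℂ ∙ ψ)ᗮ := by
  intro M ψ
  have hip : ∀ i j : ℕ+, ⟪φ i, φ j⟫_ℂ = if i = j then 1 else 0 :=
    orthonormal_iff_ite.mp φ.orthonormal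
  have hn1 : n ≠ 1 := by intro h; rw [h] at hn; exact absurd hn (by decide)
  have hn0 : ((n:ℕ):ℂ) ≠ 0 := Nat.cast_ne_zero.mpr n.pos.ne'
  -- ψ is orthogonal to Wn m for m ∈ M
  have hker : ∀ m ∈ M, ⟪ψ, Wn m⟫_ℂ = 0 := by
    set f : F →L[ℂ] ℂ := (innerSL ℂ ψ).comp Wn with hf
    have hMle : M ≤ LinearMap.ker (f : F →ₗ[ℂ] ℂ) := by
      have hclosed : IsClosed ((LinearMap.ker (f : F →ₗ[ℂ] ℂ) : Submodule ℂ F) : Set F) :=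
        ContinuousLinearMap.isClosed_ker f
      apply Submodule.topologicalClosure_minimal _ _ hclosed
      rw [Submodule.span_le]
      rintro x ⟨k, hk2, rfl⟩
      have hk1 : k ≠ 1 := by intro h; rw [h] at hk2; exact absurd hk2 (by decide)
      simp only [SetLike.mem_coe, LinearMap.mem_ker]
      by_cases hkn : k = n
      · rw [hkn]
        simp only [hf, ContinuousLinearMap.coe_coe, ContinuousLinearMap.comp_apply, innerSL_apply_apply, hWnn, ψ,
          inner_add_right, inner_smul_right, inner_sub_left, inner_smul_left, hip,
          if_pos rfl, if_neg hn1, if_neg (fun h => hn1 h.symm : ¬ (1 : ℕ+) = n)]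
        have hcn : (starRingEnd ℂ) (((n:ℕ):ℂ) / 2) = ((n:ℕ):ℂ) / 2 := by
          simp [map_div₀, Complex.conj_ofNat]
        rw [hcn]
        field_simp
        ring
      · have hnk : ¬ (n = k) := fun h => hkn h.symm
        simp only [hf, ContinuousLinearMap.coe_coe, ContinuousLinearMap.comp_apply, innerSL_apply_apply, hWn k hk1 hkn,
          inner_smul_right, ψ, inner_sub_left, inner_smul_left, hip,
          if_neg (fun h => hk1 h.symm : ¬ (1 : ℕ+) = k), if_neg hnk]
        ring
    intro m hm
    have := hMle hm
    rw [LinearMap.mem_ker] at this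
    simpa [hf] using this
  have key : (M.map (Wn : F →ₗ[ℂ] F))ᗮ = ℂ ∙ ψ := by
    apply le_antisymm
    · intro x hx
      rw [Submodule.mem_orthogonal] at hx
      have hmem : ∀ k : ℕ+, 2 ≤ k → φ k ∈ M := fun k hk =>
        Submodule.le_topologicalClosure _ (Submodule.subset_span ⟨k, hk, rfl⟩)
      have hmap : ∀ m ∈ M, ⟪Wn m, x⟫_ℂ = 0 := fun m hm =>
        hx _ ⟨m, hm, rfl⟩
      have hco : ∀ k : ℕ+, 2 ≤ k → k ≠ n → ⟪φ k, x⟫_ℂ = 0 := by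
        intro k hk hkn
        have hk1 : k ≠ 1 := by intro h; rw [h] at hk; exact absurd hk (by decide)
        have hk0 : ((k:ℕ):ℂ) ≠ 0 := Nat.cast_ne_zero.mpr k.pos.ne'
        have h1 : Wn (((k:ℕ):ℂ) • φ k) = φ k := by
          rw [map_smul, hWn k hk1 hkn, smul_smul]
          rw [mul_one_div, div_self hk0, one_smul]
        have := hmap _ (M.smul_mem ((k:ℕ):ℂ) (hmem k hk))
        rwa [h1] at this
      have hnn : ⟪Wn (φ n), x⟫_ℂ = 0 := hmap _ (hmem n hn)
      set a := ⟪φ 1, x⟫_ℂ with ha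
      set b := ⟪φ n, x⟫_ℂ with hbdef
      have hb : b = -(((n:ℕ):ℂ)/2) * a := by
        rw [hWnn, inner_add_left, inner_smul_left, inner_smul_left, ← ha, ← hbdef] at hnn
        have hc1 : (starRingEnd ℂ) (1 / ((n:ℕ):ℂ)) = 1 / ((n:ℕ):ℂ) := by simp [map_div₀]
        have hc2 : (starRingEnd ℂ) (2 / ((n:ℕ):ℂ)^2) = 2 / ((n:ℕ):ℂ)^2 := by
          simp [map_div₀, Complex.conj_ofNat]
        rw [hc1, hc2] at hnn
        field_simp at hnn
        have hnn' : a * ((n:ℕ):ℂ) + 2 * b = 0 :=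
          mul_right_cancel₀ hn0 (by linear_combination ((n:ℕ):ℂ) * hnn)
        linear_combination hnn' / 2
      have hxa : x = a • ψ := by
        apply φ.repr.injective
        apply lp.ext
        funext i
        rw [φ.repr_apply_apply, φ.repr_apply_apply]
        have hψi : ∀ i : ℕ+, ⟪φ i, ψ⟫_ℂ =
            (if i = 1 then 1 else 0) - ((n:ℕ):ℂ)/2 * (if i = n then 1 else 0) := by
          intro i
          simp [ψ, inner_sub_right, inner_smul_right, hip]
        rw [inner_smul_right, hψi]
        by_cases hi1 : i = 1
        · subst hi1
          rw [if_pos rfl, if_neg (Ne.symm hn1)]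
          ring
        · by_cases hin : i = n
          · subst hin
            rw [if_neg hi1, if_pos rfl, ← hbdef, hb]
            ring
          · have hi2 : 2 ≤ i := by
              by_contra h
              push_neg at h
              exact hi1 (le_antisymm (PNat.lt_add_one_iff.mp h) i.one_le)
            rw [hco i hi2 hin, if_neg hi1, if_neg hin]
            ring
      rw [hxa]
      exact Submodule.smul_mem _ _ (Submodule.mem_span_singleton_self ψ)
    · rw [Submodule.span_singleton_le_iff_mem, Submodule.mem_orthogonal]
      rintro u ⟨m, hm, rfl⟩
      rw [← inner_conj_symm]
      simp only [ContinuousLinearMap.coe_coe]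
      rw [hker m hm, map_zero]
  calc (M.map (Wn : F →ₗ[ℂ] F)).topologicalClosure
      = (M.map (Wn : F →ₗ[ℂ] F))ᗮᗮ :=
        (Submodule.orthogonal_orthogonal_eq_closure _).symm
    _ = (ℂ ∙ ψ)ᗮ := by rw [key]
end

section
/- There exist a Hilbert space H, a closed subspace M, positive bounded operators W_n and W with W_n → W in operator norm, such that the orthogonal projections P_n onto the closures of W_n(M) do not converge strongly to the orthogonal projection P onto the closure of W(M). -/
open ContinuousLinearMap Submodule Filter
open scoped InnerProductSpace Topology ComplexConjugate ENNReal

noncomputable section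
namespace Stmt8

abbrev Hsp : Type := lp (fun _ : ℕ => ℂ) 2

/-- diagonal weights -/
def w (k : ℕ) : ℝ := (2:ℝ)⁻¹ ^ k

lemma w_pos (k : ℕ) : 0 < w k := by unfold w; positivity
lemma w_le_one (k : ℕ) : w k ≤ 1 := by
  rw [w]; exact pow_le_one₀ (by norm_num) (by norm_num)
lemma w_zero : w 0 = 1 := by simp [w]

/-- the standard basis vectors -/
def ee (i : ℕ) : Hsp := lp.single 2 i (1:ℂ)

lemma norm_w_mul_le (k : ℕ) (z : ℂ) : ‖(w k : ℂ) * z‖ ≤ ‖z‖ := by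
  rw [norm_mul]
  have h : ‖(w k : ℂ)‖ ≤ 1 := by
    rw [Complex.norm_real, Real.norm_eq_abs, abs_of_pos (w_pos k)]; exact w_le_one k
  nlinarith [norm_nonneg z]

lemma memℓp_diag (x : Hsp) : Memℓp (fun k => (w k : ℂ) * x k) 2 := by
  apply memℓp_gen
  have hx : Summable fun k => ‖x k‖ ^ (2:ℝ≥0∞).toReal := (lp.memℓp x).summable (by norm_num)
  refine Summable.of_nonneg_of_le (fun k => by positivity) (fun k => ?_) hx
  exact Real.rpow_le_rpow (norm_nonneg _) (norm_w_mul_le k (x k)) (by norm_num)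

/-- the diagonal operator -/
def D : Hsp →L[ℂ] Hsp :=
  LinearMap.mkContinuous
    { toFun := fun x => ⟨fun k => (w k : ℂ) * x k, memℓp_diag x⟩
      map_add' := by
        intro x y; apply lp.ext; funext k
        show (w k : ℂ) * (x + y) k = ((⟨_, memℓp_diag x⟩ : Hsp) + ⟨_, memℓp_diag y⟩) k
        rw [lp.coeFn_add]
        show (w k : ℂ) * (x k + y k) = (w k : ℂ) * x k + (w k : ℂ) * y k
        ring
      map_smul' := by
        intro c x; apply lp.ext; funext k
        show (w k : ℂ) * (c • x) k = (c • (⟨_, memℓp_diag x⟩ : Hsp)) k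
        rw [lp.coeFn_smul]
        show (w k : ℂ) * (c * x k) = c * ((w k : ℂ) * x k)
        ring }
    1
    (by
      intro x
      rw [one_mul]
      apply lp.norm_le_of_forall_sum_le (by norm_num) (norm_nonneg x)
      intro s
      have hb := lp.sum_rpow_le_norm_rpow (p := 2) (by norm_num) x s
      refine le_trans (Finset.sum_le_sum fun i _ => ?_) hb
      exact Real.rpow_le_rpow (norm_nonneg _) (norm_w_mul_le i (x i)) (by norm_num))

lemma D_apply (x : Hsp) (k : ℕ) : (D x) k = (w k : ℂ) * x k := rfl

/-- coordinate functional -/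
def coord (i : ℕ) : Hsp →L[ℂ] ℂ :=
  LinearMap.mkContinuous
    { toFun := fun x => x i
      map_add' := by
        intro x y
        show (x + y) i = x i + y i
        rw [lp.coeFn_add]; rfl
      map_smul' := by
        intro c x
        show (c • x) i = c * x i
        rw [lp.coeFn_smul]; rfl }
    1
    (fun x => by simpa using lp.norm_apply_le_norm (by norm_num) x i)

lemma coord_apply (i : ℕ) (x : Hsp) : coord i x = x i := rfl

lemma norm_coord_le (i : ℕ) : ‖coord i‖ ≤ 1 :=
  LinearMap.mkContinuous_norm_le _ (by norm_num) _

lemma norm_ee (i : ℕ) : ‖ee i‖ = 1 := by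
  have := lp.norm_single (p := 2) (E := fun _ : ℕ => ℂ) (by norm_num) i (1:ℂ)
  simpa [ee] using this

/-- rank one operator x ↦ x j • e i -/
def R (i j : ℕ) : Hsp →L[ℂ] Hsp := (coord j).smulRight (ee i)

lemma R_apply (i j : ℕ) (x : Hsp) : R i j x = x j • ee i := rfl

lemma norm_R_le (i j : ℕ) : ‖R i j‖ ≤ 1 := by
  rw [R, ContinuousLinearMap.norm_smulRight_apply, norm_ee, mul_one]
  exact norm_coord_le j

lemma ee_apply (i k : ℕ) : (ee i) k = if k = i then 1 else 0 := by
  by_cases h : k = i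
  · subst h; simp [ee, lp.single_apply_self]
  · simp [ee, lp.single_apply_ne 2 i _ h, h]

lemma inner_ee_left (i : ℕ) (x : Hsp) : ⟪ee i, x⟫_ℂ = x i := by
  rw [ee, lp.inner_single_left]
  simp [RCLike.inner_apply]

lemma inner_ee_right (i : ℕ) (x : Hsp) : ⟪x, ee i⟫_ℂ = conj (x i) := by
  rw [ee, lp.inner_single_right]
  simp [RCLike.inner_apply]

/-- coupling constant -/
def cc (n : ℕ) : ℝ := w (n+1) / 2

lemma cc_pos (n : ℕ) : 0 < cc n := by unfold cc; have := w_pos (n+1); linarith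

/-- the perturbed operators -/
def Wop (n : ℕ) : Hsp →L[ℂ] Hsp := D + ((cc n : ℂ)) • (R 0 (n+1) + R (n+1) 0)

lemma Wop_apply (n : ℕ) (x : Hsp) :
    Wop n x = D x + (cc n : ℂ) • (x (n+1) • ee 0 + x 0 • ee (n+1)) := rfl

lemma Wop_sub_D (n : ℕ) : Wop n - D = ((cc n : ℂ)) • (R 0 (n+1) + R (n+1) 0) := by
  rw [Wop]; abel

end Stmt8
namespace Stmt8

lemma isSymm_D : (D : Hsp →ₗ[ℂ] Hsp).IsSymmetric := by
  intro x y
  rw [lp.inner_eq_tsum, lp.inner_eq_tsum]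
  apply tsum_congr
  intro k
  show ⟪(D x) k, y k⟫_ℂ = ⟪x k, (D y) k⟫_ℂ
  rw [D_apply, D_apply]
  simp only [RCLike.inner_apply, map_mul, Complex.conj_ofReal]
  ring

lemma isSymm_Wop (n : ℕ) : ((Wop n : Hsp →L[ℂ] Hsp) : Hsp →ₗ[ℂ] Hsp).IsSymmetric := by
  intro x y
  show ⟪Wop n x, y⟫_ℂ = ⟪x, Wop n y⟫_ℂ
  rw [Wop_apply, Wop_apply]
  rw [inner_add_left, inner_add_right]
  rw [show ⟪D x, y⟫_ℂ = ⟪x, D y⟫_ℂ from isSymm_D x y]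
  congr 1
  rw [inner_smul_left, inner_smul_right, Complex.conj_ofReal]
  congr 1
  rw [inner_add_left, inner_add_right, inner_smul_left, inner_smul_left,
    inner_smul_right, inner_smul_right, inner_ee_left, inner_ee_left,
    inner_ee_right, inner_ee_right]
  ring

lemma selfAdjoint_D : IsSelfAdjoint D :=
  LinearMap.IsSymmetric.isSelfAdjoint isSymm_D

lemma selfAdjoint_Wop (n : ℕ) : IsSelfAdjoint (Wop n) :=
  LinearMap.IsSymmetric.isSelfAdjoint (isSymm_Wop n)

end Stmt8
namespace Stmt8

/-- the quadratic form -/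
def Q (x : Hsp) : ℝ := ∑' k, w k * ‖x k‖^2

lemma Q_nonneg_term' (x : Hsp) (k : ℕ) : 0 ≤ w k * ‖x k‖^2 :=
  mul_nonneg (w_pos k).le (sq_nonneg _)

lemma summable_Q (x : Hsp) : Summable fun k => w k * ‖x k‖^2 := by
  have hx : Summable fun k => ‖x k‖ ^ (2:ℝ≥0∞).toReal := (lp.memℓp x).summable (by norm_num)
  have hx2 : Summable fun k => ‖x k‖^2 := by
    refine hx.congr fun k => ?_
    rw [show ((2:ℝ≥0∞).toReal) = ((2:ℕ):ℝ) by norm_num, Real.rpow_natCast]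
  refine Summable.of_nonneg_of_le (fun k => Q_nonneg_term' x k) (fun k => ?_) hx2
  have := w_le_one k
  nlinarith [sq_nonneg (‖x k‖), w_pos k]

lemma Q_nonneg_term (x : Hsp) (k : ℕ) : 0 ≤ w k * ‖x k‖^2 := Q_nonneg_term' x k

lemma Q_pos (x : Hsp) (hx : x ≠ 0) : 0 < Q x := by
  have hex : ∃ k, x k ≠ 0 := by
    by_contra h
    push_neg at h
    exact hx (lp.ext (funext fun k => by simpa using h k))
  obtain ⟨k, hk⟩ := hex
  have h1 : w k * ‖x k‖^2 ≤ Q x :=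
    Summable.le_tsum (summable_Q x) k fun j _ => Q_nonneg_term x j
  have h2 : 0 < w k * ‖x k‖^2 := by
    have h3 : 0 < ‖x k‖ := norm_pos_iff.mpr hk
    have h4 := w_pos k
    nlinarith [pow_pos h3 2]
  linarith

lemma re_inner_D (x : Hsp) : (⟪D x, x⟫_ℂ).re = Q x := by
  rw [lp.inner_eq_tsum]
  have hsum : Summable fun k => ⟪(D x) k, x k⟫_ℂ := lp.summable_inner (D x) x
  rw [Complex.re_tsum hsum]
  apply tsum_congr
  intro k
  show (⟪(D x) k, x k⟫_ℂ).re = w k * ‖x k‖^2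
  rw [D_apply]
  simp only [RCLike.inner_apply, map_mul, Complex.conj_ofReal]
  rw [mul_left_comm, Complex.mul_conj', ← Complex.ofReal_pow, ← Complex.ofReal_mul,
    Complex.ofReal_re]

lemma pos_D (x : Hsp) (hx : x ≠ 0) : 0 < (⟪D x, x⟫_ℂ).re := by
  rw [re_inner_D]; exact Q_pos x hx

lemma re_inner_Wop_ge (n : ℕ) (x : Hsp) : Q x / 2 ≤ (⟪Wop n x, x⟫_ℂ).re := by
  rw [Wop_apply, inner_add_left, Complex.add_re, re_inner_D]
  have hS : (⟪(cc n : ℂ) • ((x (n+1)) • ee 0 + (x 0) • ee (n+1)), x⟫_ℂ).re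
      = cc n * ((conj (x (n+1)) * x 0) + conj (x 0) * x (n+1)).re := by
    rw [inner_smul_left, Complex.conj_ofReal, inner_add_left, inner_smul_left, inner_smul_left,
      inner_ee_left, inner_ee_left]
    rw [Complex.re_ofReal_mul]
  rw [hS]
  -- bound the cross term
  have habs : |((conj (x (n+1)) * x 0) + conj (x 0) * x (n+1)).re|
      ≤ 2 * (‖x 0‖ * ‖x (n+1)‖) := by
    have h1 : |((conj (x (n+1)) * x 0) + conj (x 0) * x (n+1)).re|
        ≤ ‖(conj (x (n+1)) * x 0) + conj (x 0) * x (n+1)‖ := Complex.abs_re_le_norm _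
    refine h1.trans ?_
    refine (norm_add_le _ _).trans ?_
    rw [norm_mul, norm_mul, RCLike.norm_conj, RCLike.norm_conj]
    ring_nf
    nlinarith [norm_nonneg (x 0), norm_nonneg (x (n+1))]
  have hsum2 : w 0 * ‖x 0‖^2 + w (n+1) * ‖x (n+1)‖^2 ≤ Q x := by
    have := (summable_Q x).sum_le_tsum ({0, n+1} : Finset ℕ)
      (fun j _ => Q_nonneg_term x j)
    rwa [Finset.sum_pair (by omega : (0:ℕ) ≠ n+1)] at this
  have hkey : cc n * (2 * (‖x 0‖ * ‖x (n+1)‖)) ≤ Q x / 2 := by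
    have h0 : cc n * (2 * (‖x 0‖ * ‖x (n+1)‖)) = w (n+1) * (‖x 0‖ * ‖x (n+1)‖) := by
      rw [cc]; ring
    rw [h0]
    have hwm := w_pos (n+1)
    have hwm1 := w_le_one (n+1)
    have h2 : w (n+1) * (‖x 0‖ * ‖x (n+1)‖)
        ≤ (w 0 * ‖x 0‖^2 + w (n+1) * ‖x (n+1)‖^2) / 2 := by
      rw [w_zero]
      nlinarith [mul_nonneg hwm.le (sq_nonneg (‖x 0‖ - ‖x (n+1)‖)),
        mul_nonneg (by linarith : (0:ℝ) ≤ 1 - w (n+1)) (sq_nonneg (‖x 0‖))]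
    linarith
  have hc := cc_pos n
  have := neg_abs_le (((conj (x (n+1)) * x 0) + conj (x 0) * x (n+1)).re)
  have hcross : -(Q x / 2) ≤ cc n * ((conj (x (n+1)) * x 0) + conj (x 0) * x (n+1)).re := by
    nlinarith [abs_nonneg (((conj (x (n+1)) * x 0) + conj (x 0) * x (n+1)).re)]
  linarith

lemma pos_Wop (n : ℕ) (x : Hsp) (hx : x ≠ 0) : 0 < (⟪Wop n x, x⟫_ℂ).re := by
  have := re_inner_Wop_ge n x
  have := Q_pos x hx
  linarith

end Stmt8
namespace Stmt8

lemma norm_Wop_sub_D_le (n : ℕ) : ‖Wop n - D‖ ≤ w (n+1) := by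
  rw [Wop_sub_D]
  calc ‖((cc n : ℂ)) • (R 0 (n+1) + R (n+1) 0)‖
      = ‖((cc n : ℂ))‖ * ‖R 0 (n+1) + R (n+1) 0‖ := norm_smul ((cc n : ℂ)) (R 0 (n+1) + R (n+1) 0)
    _ ≤ cc n * 2 := by
        apply _root_.mul_le_mul
        · rw [Complex.norm_real, Real.norm_eq_abs, abs_of_pos (cc_pos n)]
        · calc ‖R 0 (n+1) + R (n+1) 0‖ ≤ ‖R 0 (n+1)‖ + ‖R (n+1) 0‖ := norm_add_le _ _
            _ ≤ 2 := by have := norm_R_le 0 (n+1); have := norm_R_le (n+1) 0; linarith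
        · exact norm_nonneg _
        · exact (cc_pos n).le
    _ = w (n+1) := by rw [cc]; ring

lemma tendsto_norm_Wop_sub_D : Tendsto (fun n => ‖Wop n - D‖) atTop (𝓝 0) := by
  apply squeeze_zero (fun n => norm_nonneg _) (fun n => norm_Wop_sub_D_le n)
  have h : Tendsto (fun n : ℕ => ((2:ℝ)⁻¹) ^ n) atTop (𝓝 0) :=
    tendsto_pow_atTop_nhds_zero_of_lt_one (by norm_num) (by norm_num)
  have := h.comp (tendsto_add_atTop_nat 1)
  simpa [w, Function.comp_def] using this

/-- the subspace -/
def Msub : Submodule ℂ Hsp := LinearMap.ker (coord 0 : Hsp →ₗ[ℂ] ℂ)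

lemma mem_Msub (x : Hsp) : x ∈ Msub ↔ x 0 = 0 := by
  rw [Msub, LinearMap.mem_ker]
  rfl

lemma isClosed_Msub : IsClosed (Msub : Set Hsp) :=
  ContinuousLinearMap.isClosed_ker (coord 0)

/-- the perturbed kernels -/
def gfun (n : ℕ) : Hsp →L[ℂ] ℂ := (2:ℂ) • coord 0 - coord (n+1)

lemma gfun_apply (n : ℕ) (x : Hsp) : gfun n x = 2 * x 0 - x (n+1) := rfl

def Nsub (n : ℕ) : Submodule ℂ Hsp := LinearMap.ker (gfun n : Hsp →ₗ[ℂ] ℂ)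

lemma mem_Nsub (n : ℕ) (x : Hsp) : x ∈ Nsub n ↔ 2 * x 0 - x (n+1) = 0 := by
  rw [Nsub, LinearMap.mem_ker]
  rfl

lemma isClosed_Nsub (n : ℕ) : IsClosed ((Nsub n) : Set Hsp) :=
  ContinuousLinearMap.isClosed_ker (gfun n)

/-- density lemma -/
lemma mem_topologicalClosure_of_single_mem (K : Submodule ℂ Hsp) (x : Hsp)
    (h : ∀ i, lp.single 2 i (x i) ∈ K) : x ∈ K.topologicalClosure := by
  have hsum : HasSum (fun i : ℕ => lp.single 2 i (x i)) x :=
    lp.hasSum_single (by norm_num) x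
  have htend : Tendsto (fun s : Finset ℕ => ∑ i ∈ s, lp.single 2 i (x i)) atTop (𝓝 x) := hsum
  rw [← SetLike.mem_coe, Submodule.topologicalClosure_coe]
  show x ∈ closure (K : Set Hsp)
  refine mem_closure_of_tendsto htend ?_
  filter_upwards with s
  exact Submodule.sum_mem K fun i _ => h i

end Stmt8
namespace Stmt8

lemma lp_add_apply (x y : Hsp) (k : ℕ) : (x + y) k = x k + y k := by
  rw [lp.coeFn_add]; rfl

lemma lp_sub_apply (x y : Hsp) (k : ℕ) : (x - y) k = x k - y k := by
  rw [lp.coeFn_sub]; rfl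

lemma lp_smul_apply (c : ℂ) (x : Hsp) (k : ℕ) : (c • x) k = c * x k := by
  rw [lp.coeFn_smul]; rfl

lemma single_zero' (i : ℕ) : lp.single 2 i (0:ℂ) = (0 : Hsp) := by
  apply lp.ext; funext k
  by_cases h : k = i
  · subst h; rw [lp.single_apply_self]; rfl
  · rw [lp.single_apply_ne 2 i _ h]; rfl

lemma D_single (i : ℕ) (a : ℂ) : D (lp.single 2 i a) = lp.single 2 i ((w i : ℂ) * a) := by
  apply lp.ext; funext k
  rw [D_apply]
  by_cases h : k = i
  · subst h; rw [lp.single_apply_self, lp.single_apply_self]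
  · rw [lp.single_apply_ne 2 i _ h, lp.single_apply_ne 2 i _ h, mul_zero]

lemma Wop_coord_zero (n : ℕ) (x : Hsp) :
    (Wop n x) 0 = x 0 + (cc n : ℂ) * x (n+1) := by
  rw [Wop_apply, lp_add_apply, D_apply, lp_smul_apply, lp_add_apply,
    lp_smul_apply, lp_smul_apply, ee_apply, ee_apply, w_zero]
  simp

lemma Wop_coord_m (n : ℕ) (x : Hsp) :
    (Wop n x) (n+1) = (w (n+1) : ℂ) * x (n+1) + (cc n : ℂ) * x 0 := by
  rw [Wop_apply, lp_add_apply, D_apply, lp_smul_apply, lp_add_apply,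
    lp_smul_apply, lp_smul_apply, ee_apply, ee_apply]
  simp [Nat.succ_ne_zero]

lemma Wop_coord_other (n : ℕ) (x : Hsp) (k : ℕ) (h0 : k ≠ 0) (hm : k ≠ n+1) :
    (Wop n x) k = (w k : ℂ) * x k := by
  rw [Wop_apply, lp_add_apply, D_apply, lp_smul_apply, lp_add_apply,
    lp_smul_apply, lp_smul_apply, ee_apply, ee_apply]
  simp [h0, hm]

def uvec (n : ℕ) : Hsp := ee 0 + (2:ℂ) • ee (n+1)

lemma uvec_mem_map (n : ℕ) : uvec n ∈ Msub.map ((Wop n : Hsp →L[ℂ] Hsp) : Hsp →ₗ[ℂ] Hsp) := by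
  refine ⟨((cc n : ℂ))⁻¹ • ee (n+1), ?_, ?_⟩
  · simp only [SetLike.mem_coe]
    rw [mem_Msub, lp_smul_apply, ee_apply]
    simp
  · have hcc : ((cc n : ℂ)) ≠ 0 := by
      simpa using Complex.ofReal_ne_zero.mpr (ne_of_gt (cc_pos n))
    apply lp.ext; funext k
    show (Wop n (((cc n : ℂ))⁻¹ • ee (n+1))) k = (uvec n) k
    by_cases h0 : k = 0
    · subst h0
      rw [Wop_coord_zero, lp_smul_apply, lp_smul_apply, ee_apply, ee_apply, uvec,
        lp_add_apply, lp_smul_apply, ee_apply, ee_apply]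
      have h0m : (0:ℕ) ≠ n+1 := by omega
      simp [h0m]
      field_simp
    · by_cases hm : k = n+1
      · subst hm
        rw [Wop_coord_m, lp_smul_apply, lp_smul_apply, ee_apply, ee_apply, uvec,
          lp_add_apply, lp_smul_apply, ee_apply, ee_apply]
        have h2 : ((w (n+1) : ℝ) : ℂ) = 2 * (cc n : ℂ) := by
          rw [cc]; push_cast; ring
        simp [Nat.succ_ne_zero, h2]
        field_simp
      · rw [Wop_coord_other n _ k h0 hm, lp_smul_apply, ee_apply, uvec,
          lp_add_apply, lp_smul_apply, ee_apply, ee_apply]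
        simp [h0, hm]

lemma closure_map_D : (Msub.map ((D : Hsp →L[ℂ] Hsp) : Hsp →ₗ[ℂ] Hsp)).topologicalClosure
    = Msub := by
  apply le_antisymm
  · apply Submodule.topologicalClosure_minimal
    · rintro _ ⟨z, hz, rfl⟩
      simp only [SetLike.mem_coe] at hz ⊢
      rw [mem_Msub] at hz ⊢
      show (D z) 0 = 0
      rw [D_apply, hz, mul_zero]
    · exact isClosed_Msub
  · intro x hx
    rw [mem_Msub] at hx
    apply mem_topologicalClosure_of_single_mem
    intro i
    by_cases hi : i = 0
    · subst hi
      rw [hx, single_zero']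
      exact Submodule.zero_mem _
    · refine ⟨lp.single 2 i (((w i : ℂ))⁻¹ * x i), ?_, ?_⟩
      · simp only [SetLike.mem_coe]
        rw [mem_Msub, lp.single_apply_ne 2 i _ (Ne.symm hi)]
      · rw [show ((D : Hsp →L[ℂ] Hsp) : Hsp →ₗ[ℂ] Hsp) (lp.single 2 i ((w i : ℂ)⁻¹ * x i))
            = D (lp.single 2 i ((w i : ℂ)⁻¹ * x i)) from rfl, D_single]
        congr 1
        have hw : ((w i : ℝ) : ℂ) ≠ 0 := Complex.ofReal_ne_zero.mpr (ne_of_gt (w_pos i))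
        field_simp

lemma closure_map_Wop (n : ℕ) :
    (Msub.map ((Wop n : Hsp →L[ℂ] Hsp) : Hsp →ₗ[ℂ] Hsp)).topologicalClosure = Nsub n := by
  apply le_antisymm
  · apply Submodule.topologicalClosure_minimal
    · rintro _ ⟨z, hz, rfl⟩
      simp only [SetLike.mem_coe] at hz ⊢
      rw [mem_Msub] at hz
      rw [mem_Nsub]
      show 2 * (Wop n z) 0 - (Wop n z) (n+1) = 0
      rw [Wop_coord_zero, Wop_coord_m, hz]
      have h2 : ((w (n+1) : ℝ) : ℂ) = 2 * (cc n : ℂ) := by rw [cc]; push_cast; ring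
      rw [h2]; ring
    · exact isClosed_Nsub n
  · intro x hx
    rw [mem_Nsub] at hx
    set K := Msub.map ((Wop n : Hsp →L[ℂ] Hsp) : Hsp →ₗ[ℂ] Hsp) with hK
    have hu : uvec n ∈ K.topologicalClosure :=
      K.le_topologicalClosure (uvec_mem_map n)
    have hy : (x - (x 0) • uvec n) ∈ K.topologicalClosure := by
      apply mem_topologicalClosure_of_single_mem
      intro i
      have hy0 : (x - (x 0) • uvec n) 0 = 0 := by
        rw [lp_sub_apply, lp_smul_apply, uvec, lp_add_apply, lp_smul_apply, ee_apply, ee_apply]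
        simp
      have hym : (x - (x 0) • uvec n) (n+1) = 0 := by
        rw [lp_sub_apply, lp_smul_apply, uvec, lp_add_apply, lp_smul_apply, ee_apply, ee_apply]
        simp [Nat.succ_ne_zero]
        linear_combination -hx
      by_cases hi : i = 0
      · subst hi; rw [hy0, single_zero']; exact Submodule.zero_mem _
      · by_cases him : i = n+1
        · subst him; rw [hym, single_zero']; exact Submodule.zero_mem _
        · refine ⟨lp.single 2 i (((w i : ℂ))⁻¹ * (x - (x 0) • uvec n) i), ?_, ?_⟩
          · simp only [SetLike.mem_coe]
            rw [mem_Msub, lp.single_apply_ne 2 i _ (Ne.symm hi)]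
          · show Wop n (lp.single 2 i ((w i : ℂ)⁻¹ * (x - (x 0) • uvec n) i))
                = lp.single 2 i ((x - (x 0) • uvec n) i)
            apply lp.ext; funext k
            by_cases hk : k = i
            · subst hk
              rw [Wop_coord_other n _ k hi him, lp.single_apply_self, lp.single_apply_self]
              have hw : ((w k : ℝ) : ℂ) ≠ 0 := Complex.ofReal_ne_zero.mpr (ne_of_gt (w_pos k))
              field_simp
            · by_cases hk0 : k = 0
              · subst hk0
                rw [Wop_coord_zero, lp.single_apply_ne 2 i _ (Ne.symm hi),
                  lp.single_apply_ne 2 i _ (Ne.symm hi),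
                  lp.single_apply_ne 2 i _ (fun h => him h.symm)]
                simp
              · by_cases hkm : k = n+1
                · subst hkm
                  rw [Wop_coord_m, lp.single_apply_ne 2 i _ (fun h => him h.symm),
                    lp.single_apply_ne 2 i _ (fun h => him h.symm),
                    lp.single_apply_ne 2 i _ (fun h => hi h.symm)]
                  simp
                · rw [Wop_coord_other n _ k hk0 hkm, lp.single_apply_ne 2 i _ hk,
                    lp.single_apply_ne 2 i _ hk, mul_zero]
    have := Submodule.add_mem _ (Submodule.smul_mem _ (x 0) hu) hy
    simpa using this

end Stmt8
namespace Stmt8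

/-- the projection onto the closure of W(M) -/
def Pop : Hsp →L[ℂ] Hsp :=
  ContinuousLinearMap.id ℂ Hsp - (innerSL ℂ (ee 0)).smulRight (ee 0)

lemma Pop_apply (x : Hsp) : Pop x = x - ⟪ee 0, x⟫_ℂ • ee 0 := rfl

def vvec (n : ℕ) : Hsp := (2:ℂ) • ee 0 - ee (n+1)

/-- the projections onto the closures of Wn(M) -/
def Pn (n : ℕ) : Hsp →L[ℂ] Hsp :=
  ContinuousLinearMap.id ℂ Hsp - (((5:ℂ)⁻¹) • innerSL ℂ (vvec n)).smulRight (vvec n)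

lemma Pn_apply (n : ℕ) (x : Hsp) :
    Pn n x = x - ((5:ℂ)⁻¹ * ⟪vvec n, x⟫_ℂ) • vvec n := rfl

lemma inner_vvec (n : ℕ) (x : Hsp) : ⟪vvec n, x⟫_ℂ = 2 * x 0 - x (n+1) := by
  rw [vvec, inner_sub_left, inner_smul_left, inner_ee_left, inner_ee_left,
    Complex.conj_ofNat]

lemma inner_vvec_right (n : ℕ) (x : Hsp) :
    ⟪x, vvec n⟫_ℂ = conj (2 * x 0 - x (n+1)) := by
  rw [vvec, inner_sub_right, inner_smul_right, inner_ee_right, inner_ee_right,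
    map_sub, map_mul, Complex.conj_ofNat]

lemma Pop_mem (x : Hsp) : Pop x ∈ Msub := by
  rw [mem_Msub, Pop_apply, lp_sub_apply, lp_smul_apply, inner_ee_left, ee_apply]
  simp

lemma Pop_orth (x : Hsp) : x - Pop x ∈ Msubᗮ := by
  have hxP : x - Pop x = ⟪ee 0, x⟫_ℂ • ee 0 := by
    rw [Pop_apply]; abel
  rw [hxP]
  rw [Submodule.mem_orthogonal]
  intro u hu
  rw [mem_Msub] at hu
  rw [inner_smul_right, inner_ee_right, hu]
  simp

lemma Pn_mem (n : ℕ) (x : Hsp) : Pn n x ∈ Nsub n := by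
  rw [Nsub, LinearMap.mem_ker]
  show gfun n (Pn n x) = 0
  rw [Pn_apply, map_sub, map_smul]
  have h1 : gfun n x = 2 * x 0 - x (n+1) := rfl
  have h2 : gfun n (vvec n) = 5 := by
    rw [gfun_apply, vvec, lp_sub_apply, lp_sub_apply, lp_smul_apply, lp_smul_apply,
      ee_apply, ee_apply, ee_apply, ee_apply]
    have h0m : (0:ℕ) ≠ n+1 := by omega
    simp [h0m, Nat.succ_ne_zero]
    norm_num
  rw [h1, h2, inner_vvec]
  simp
  ring

lemma Pn_orth (n : ℕ) (x : Hsp) : x - Pn n x ∈ (Nsub n)ᗮ := by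
  have hxP : x - Pn n x = ((5:ℂ)⁻¹ * ⟪vvec n, x⟫_ℂ) • vvec n := by
    rw [Pn_apply]; abel
  rw [hxP, Submodule.mem_orthogonal]
  intro u hu
  rw [mem_Nsub] at hu
  rw [inner_smul_right, inner_vvec_right, hu]
  simp

lemma Pop_ee0 : Pop (ee 0) = 0 := by
  rw [Pop_apply, inner_ee_left, ee_apply]
  simp

lemma coord0_Pn_ee0 (n : ℕ) : (Pn n (ee 0)) 0 = 5⁻¹ := by
  rw [Pn_apply, lp_sub_apply, lp_smul_apply, inner_vvec]
  rw [vvec, lp_sub_apply, lp_smul_apply, ee_apply, ee_apply, ee_apply]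
  have h0m : (0:ℕ) ≠ n+1 := by omega
  simp [h0m]
  norm_num

lemma not_tendsto : ¬ Tendsto (fun n => Pn n (ee 0)) atTop (𝓝 (Pop (ee 0))) := by
  intro h
  rw [Pop_ee0] at h
  have hc : Tendsto (fun n => (Pn n (ee 0)) 0) atTop (𝓝 ((0 : Hsp) 0)) := by
    have := ((coord 0).continuous.tendsto (0 : Hsp)).comp h
    exact this
  have h0 : ((0 : Hsp) : ℕ → ℂ) 0 = 0 := rfl
  rw [h0] at hc
  have hconst : (fun n => (Pn n (ee 0)) 0) = fun _ => (5⁻¹ : ℂ) :=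
    funext fun n => coord0_Pn_ee0 n
  rw [hconst] at hc
  have := tendsto_nhds_unique hc tendsto_const_nhds
  norm_num at this

end Stmt8
end

set_option synthInstance.maxHeartbeats 1000000
set_option maxHeartbeats 1000000

/-- There exist a Hilbert space `H`, a closed subspace `M`, positive bounded
operators `W_n → W` in operator norm such that the orthogonal projections `P_n` onto the
closures of `W_n(M)` do not converge strongly to the projection `P` onto the closure of
`W(M)`. -/
theorem stmt_8 :
    ∃ (H : Type) (g : NormedAddCommGroup H), ∃ ip : @InnerProductSpace ℂ H _ g.toSeminormedAddCommGroup,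
    letI := g
    letI := ip
    ∃ (_ : CompleteSpace H) (M : Submodule ℂ H) (Wn : ℕ → H →L[ℂ] H) (W : H →L[ℂ] H)
      (Pn : ℕ → H →L[ℂ] H) (P : H →L[ℂ] H),
      IsClosed (M : Set H) ∧
      (∀ n, IsSelfAdjoint (Wn n)) ∧ IsSelfAdjoint W ∧
      (∀ n, ∀ f : H, f ≠ 0 → 0 < (⟪(Wn n) f, f⟫_ℂ).re) ∧
      (∀ f : H, f ≠ 0 → 0 < (⟪W f, f⟫_ℂ).re) ∧
      Tendsto (fun n => ‖Wn n - W‖) atTop (𝓝 0) ∧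
      (∀ n, ∀ f : H, Pn n f ∈ ((M.map ((Wn n) : H →ₗ[ℂ] H)).topologicalClosure) ∧
        f - Pn n f ∈ ((M.map ((Wn n) : H →ₗ[ℂ] H)).topologicalClosure)ᗮ) ∧
      (∀ f : H, P f ∈ ((M.map (W : H →ₗ[ℂ] H)).topologicalClosure) ∧
        f - P f ∈ ((M.map (W : H →ₗ[ℂ] H)).topologicalClosure)ᗮ) ∧
      ∃ f : H, ¬ Tendsto (fun n => Pn n f) atTop (𝓝 (P f)) := by
  refine ⟨Stmt8.Hsp, inferInstance, inferInstance, inferInstance, Stmt8.Msub,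
    Stmt8.Wop, Stmt8.D, Stmt8.Pn, Stmt8.Pop, Stmt8.isClosed_Msub, Stmt8.selfAdjoint_Wop,
    Stmt8.selfAdjoint_D, fun n f hf => Stmt8.pos_Wop n f hf, fun f hf => Stmt8.pos_D f hf,
    Stmt8.tendsto_norm_Wop_sub_D, ?_, ?_, ⟨Stmt8.ee 0, Stmt8.not_tendsto⟩⟩
  · intro n f
    constructor
    · rw [Stmt8.closure_map_Wop n]; exact Stmt8.Pn_mem n f
    · rw [Stmt8.closure_map_Wop n]; exact Stmt8.Pn_orth n f
  · intro f
    constructor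
    · rw [Stmt8.closure_map_D]; exact Stmt8.Pop_mem f
    · rw [Stmt8.closure_map_D]; exact Stmt8.Pop_orth f
end

section
/- Let C^α and C be bounded positive definite operators on a Hilbert space F with common lower bound γ > 0, and suppose C^α → C in operator norm. Let F_s be a closed subspace. Then the orthogonal projections P^α_s onto √(C^α)(F_s) converge strongly (in fact in norm) to the orthogonal projection P_s onto √C(F_s). -/
open ContinuousLinearMap Submodule Filter
open scoped InnerProductSpace Topology

set_option synthInstance.maxHeartbeats 1000000
set_option maxHeartbeats 1000000

section Aux

variable {F : Type*} [NormedAddCommGroup F] [InnerProductSpace ℂ F] [CompleteSpace F]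

/-- If `R` is selfadjoint with `R ∘L R = C`, then `‖R x‖² = re ⟪C x, x⟫`. -/
lemma aux_norm_sq (R C : F →L[ℂ] F) (hRsa : IsSelfAdjoint R) (hRC : R ∘L R = C) (x : F) :
    ‖R x‖^2 = (⟪C x, x⟫_ℂ).re := by
  rw [← hRC]
  have h := adjoint_inner_left R (R x) x
  rw [hRsa.adjoint_eq] at h
  rw [comp_apply, ← inner_conj_symm, ← h]
  simpa using (inner_self_eq_norm_sq (𝕜 := ℂ) (R x)).symm

/-- Lower bound for a selfadjoint square root of an operator bounded below. -/
lemma aux_low {γ : ℝ} (hγ : 0 < γ) (R C : F →L[ℂ] F) (hRsa : IsSelfAdjoint R)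
    (hRC : R ∘L R = C) (hC : ∀ f : F, γ * ‖f‖^2 ≤ (⟪C f, f⟫_ℂ).re) (x : F) :
    Real.sqrt γ * ‖x‖ ≤ ‖R x‖ := by
  have h1 : γ * ‖x‖^2 ≤ ‖R x‖^2 := (aux_norm_sq R C hRsa hRC x) ▸ hC x
  nlinarith [Real.sq_sqrt hγ.le, Real.sqrt_nonneg γ, norm_nonneg x, norm_nonneg (R x)]

/-- Key quantitative estimate: projections onto images of `Fs` under operators that are
bounded below differ by a multiple of the operator difference. -/
lemma aux_proj_bound {γ : ℝ} (hγ : 0 < γ) (S R : F →L[ℂ] F)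
    (hS : ∀ x : F, Real.sqrt γ * ‖x‖ ≤ ‖S x‖) (hR : ∀ x : F, Real.sqrt γ * ‖x‖ ≤ ‖R x‖)
    (Fs : Submodule ℂ F) (Q P : F →L[ℂ] F)
    (hQ : ∀ f : F, Q f ∈ Fs.map (S : F →ₗ[ℂ] F) ∧ f - Q f ∈ (Fs.map (S : F →ₗ[ℂ] F))ᗮ)
    (hP : ∀ f : F, P f ∈ Fs.map (R : F →ₗ[ℂ] F) ∧ f - P f ∈ (Fs.map (R : F →ₗ[ℂ] F))ᗮ) :
    ‖Q - P‖ ≤ 2 / Real.sqrt γ * ‖S - R‖ := by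
  have hsγ : 0 < Real.sqrt γ := Real.sqrt_pos.mpr hγ
  refine opNorm_le_bound _ (by positivity) fun f => ?_
  set M := Fs.map (R : F →ₗ[ℂ] F) with hM
  set N := Fs.map (S : F →ₗ[ℂ] F) with hN
  obtain ⟨hPf1, hPf2⟩ := hP f
  have orthM : ∀ v ∈ M, ⟪v, f - P f⟫_ℂ = 0 := fun v hv =>
    (Submodule.mem_orthogonal M (f - P f)).mp hPf2 v hv
  -- the decomposition f = g + m
  set g := f - P f with hg
  set m := P f with hm
  -- ‖m‖ ≤ ‖f‖ and ‖g‖ ≤ ‖f‖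
  have pyth : ‖f‖ * ‖f‖ = ‖m‖ * ‖m‖ + ‖g‖ * ‖g‖ := by
    have h0 : ⟪m, g⟫_ℂ = 0 := orthM _ hPf1
    have := norm_add_sq_eq_norm_sq_add_norm_sq_of_inner_eq_zero m g h0
    rw [show m + g = f by simp [hm, hg]] at this
    exact this
  have hmf : ‖m‖ ≤ ‖f‖ := by nlinarith [norm_nonneg m, norm_nonneg g, norm_nonneg f]
  have hgf : ‖g‖ ≤ ‖f‖ := by nlinarith [norm_nonneg m, norm_nonneg g, norm_nonneg f]
  -- Term A : √γ ‖Q g‖ ≤ ‖S - R‖ * ‖g‖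
  have hA : Real.sqrt γ * ‖Q g‖ ≤ ‖S - R‖ * ‖g‖ := by
    obtain ⟨hQg1, hQg2⟩ := hQ g
    obtain ⟨y, hy, hyS⟩ := Submodule.mem_map.mp hQg1
    by_cases hz : ‖Q g‖ = 0
    · rw [hz, mul_zero]; positivity
    have hzpos : 0 < ‖Q g‖ := lt_of_le_of_ne (norm_nonneg _) (Ne.symm hz)
    -- ⟪g, Q g⟫ = ⟪Q g, Q g⟫
    have e1' : ⟪g - Q g, Q g⟫_ℂ = 0 :=
      (Submodule.mem_orthogonal' N (g - Q g)).mp hQg2 (Q g) hQg1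
    have e2 : ⟪g, Q g⟫_ℂ = ⟪Q g, Q g⟫_ℂ := by
      have := inner_add_left (𝕜 := ℂ) (g - Q g) (Q g) (Q g)
      rw [sub_add_cancel, e1'] at this
      rw [this, zero_add]
    have e3 : ‖Q g‖^2 = (⟪g, Q g⟫_ℂ).re := by
      rw [e2]
      have := inner_self_eq_norm_sq (𝕜 := ℂ) (Q g)
      simpa using this.symm
    -- ⟪g, R y⟫ = 0
    have e4 : ⟪g, (R : F →ₗ[ℂ] F) y⟫_ℂ = 0 := by
      have h' : ⟪(R : F →ₗ[ℂ] F) y, g⟫_ℂ = 0 :=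
        orthM _ (Submodule.mem_map_of_mem hy)
      rw [← inner_conj_symm, h', map_zero]
    have e5 : (⟪g, Q g⟫_ℂ).re ≤ ‖g‖ * (‖S - R‖ * ‖y‖) := by
      have hsub : ⟪g, Q g⟫_ℂ = ⟪g, (S - R) y⟫_ℂ := by
        rw [← hyS]
        have hsa : (S - R) y = (S : F →ₗ[ℂ] F) y - (R : F →ₗ[ℂ] F) y := by
          simp
        rw [hsa, inner_sub_right, e4, sub_zero]
      calc (⟪g, Q g⟫_ℂ).re = (⟪g, (S - R) y⟫_ℂ).re := by rw [hsub]
        _ ≤ ‖⟪g, (S - R) y⟫_ℂ‖ := Complex.re_le_norm _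
        _ ≤ ‖g‖ * ‖(S - R) y‖ := norm_inner_le_norm _ _
        _ ≤ ‖g‖ * (‖S - R‖ * ‖y‖) :=
            mul_le_mul_of_nonneg_left ((S - R).le_opNorm y) (norm_nonneg g)
    have e6 : Real.sqrt γ * ‖y‖ ≤ ‖Q g‖ := by
      rw [← hyS]; exact hS y
    have p1 : ‖Q g‖^2 ≤ ‖g‖ * (‖S - R‖ * ‖y‖) := e3 ▸ e5
    have p2 : Real.sqrt γ * ‖Q g‖^2 ≤ Real.sqrt γ * (‖g‖ * (‖S - R‖ * ‖y‖)) :=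
      mul_le_mul_of_nonneg_left p1 (Real.sqrt_nonneg γ)
    have p4 : (‖g‖ * ‖S - R‖) * (Real.sqrt γ * ‖y‖) ≤ (‖g‖ * ‖S - R‖) * ‖Q g‖ :=
      mul_le_mul_of_nonneg_left e6 (by positivity)
    have p5 : Real.sqrt γ * ‖Q g‖ * ‖Q g‖ ≤ (‖S - R‖ * ‖g‖) * ‖Q g‖ := by
      calc Real.sqrt γ * ‖Q g‖ * ‖Q g‖ = Real.sqrt γ * ‖Q g‖^2 := by ring
        _ ≤ Real.sqrt γ * (‖g‖ * (‖S - R‖ * ‖y‖)) := p2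
        _ = (‖g‖ * ‖S - R‖) * (Real.sqrt γ * ‖y‖) := by ring
        _ ≤ (‖g‖ * ‖S - R‖) * ‖Q g‖ := p4
        _ = (‖S - R‖ * ‖g‖) * ‖Q g‖ := by ring
    exact le_of_mul_le_mul_right p5 hzpos
  -- Term B : √γ ‖m - Q m‖ ≤ ‖S - R‖ * ‖f‖
  have hB : Real.sqrt γ * ‖m - Q m‖ ≤ ‖S - R‖ * ‖f‖ := by
    obtain ⟨x, hx, hxR⟩ := Submodule.mem_map.mp hPf1
    obtain ⟨hQm1, hQm2⟩ := hQ m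
    have hSx : (S : F →ₗ[ℂ] F) x ∈ N := Submodule.mem_map_of_mem hx
    have o1 : ⟪Q m - (S : F →ₗ[ℂ] F) x, m - Q m⟫_ℂ = 0 :=
      (Submodule.mem_orthogonal N (m - Q m)).mp hQm2 _ (Submodule.sub_mem N hQm1 hSx)
    have o1' : ⟪m - Q m, Q m - (S : F →ₗ[ℂ] F) x⟫_ℂ = 0 := by
      rw [← inner_conj_symm, o1, map_zero]
    have pyth2 : ‖m - (S : F →ₗ[ℂ] F) x‖ * ‖m - (S : F →ₗ[ℂ] F) x‖
        = ‖m - Q m‖ * ‖m - Q m‖ + ‖Q m - (S : F →ₗ[ℂ] F) x‖ * ‖Q m - (S : F →ₗ[ℂ] F) x‖ := by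
      have := norm_add_sq_eq_norm_sq_add_norm_sq_of_inner_eq_zero _ _ o1'
      rw [show m - Q m + (Q m - (S : F →ₗ[ℂ] F) x) = m - (S : F →ₗ[ℂ] F) x by abel] at this
      exact this
    have q1 : ‖m - Q m‖ ≤ ‖m - (S : F →ₗ[ℂ] F) x‖ := by
      nlinarith [norm_nonneg (m - Q m), norm_nonneg (m - (S : F →ₗ[ℂ] F) x),
        sq_nonneg ‖Q m - (S : F →ₗ[ℂ] F) x‖]
    have q2 : ‖m - (S : F →ₗ[ℂ] F) x‖ ≤ ‖S - R‖ * ‖x‖ := by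
      have : m - (S : F →ₗ[ℂ] F) x = (R - S) x := by
        rw [← hxR]; simp
      rw [this]
      calc ‖(R - S) x‖ ≤ ‖R - S‖ * ‖x‖ := (R - S).le_opNorm x
        _ = ‖S - R‖ * ‖x‖ := by rw [norm_sub_rev]
    have q3 : Real.sqrt γ * ‖x‖ ≤ ‖m‖ := by
      have := hR x
      rw [show (R x : F) = (R : F →ₗ[ℂ] F) x from rfl, hxR] at this
      exact this
    calc Real.sqrt γ * ‖m - Q m‖ ≤ Real.sqrt γ * (‖S - R‖ * ‖x‖) :=
          mul_le_mul_of_nonneg_left (q1.trans q2) (Real.sqrt_nonneg γ)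
      _ = ‖S - R‖ * (Real.sqrt γ * ‖x‖) := by ring
      _ ≤ ‖S - R‖ * ‖m‖ := mul_le_mul_of_nonneg_left q3 (norm_nonneg _)
      _ ≤ ‖S - R‖ * ‖f‖ := mul_le_mul_of_nonneg_left hmf (norm_nonneg _)
  -- combine
  have hsplit : (Q - P) f = Q g + (Q m - m) := by
    have hgm : g + m = f := by simp [hg, hm]
    calc (Q - P) f = Q f - m := by simp [hm]
      _ = Q (g + m) - m := by rw [hgm]
      _ = Q g + (Q m - m) := by rw [map_add]; abel
  have hfinal : Real.sqrt γ * ‖(Q - P) f‖ ≤ 2 * ‖S - R‖ * ‖f‖ := by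
    have h1 : ‖(Q - P) f‖ ≤ ‖Q g‖ + ‖m - Q m‖ := by
      rw [hsplit]
      calc ‖Q g + (Q m - m)‖ ≤ ‖Q g‖ + ‖Q m - m‖ := norm_add_le _ _
        _ = ‖Q g‖ + ‖m - Q m‖ := by rw [norm_sub_rev]
    calc Real.sqrt γ * ‖(Q - P) f‖ ≤ Real.sqrt γ * (‖Q g‖ + ‖m - Q m‖) :=
          mul_le_mul_of_nonneg_left h1 (Real.sqrt_nonneg γ)
      _ = Real.sqrt γ * ‖Q g‖ + Real.sqrt γ * ‖m - Q m‖ := by ring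
      _ ≤ ‖S - R‖ * ‖g‖ + ‖S - R‖ * ‖f‖ := add_le_add hA hB
      _ ≤ ‖S - R‖ * ‖f‖ + ‖S - R‖ * ‖f‖ :=
          add_le_add_left (mul_le_mul_of_nonneg_left hgf (norm_nonneg _)) _
      _ = 2 * ‖S - R‖ * ‖f‖ := by ring
  rw [show 2 / Real.sqrt γ * ‖S - R‖ * ‖f‖ = 2 * ‖S - R‖ * ‖f‖ / Real.sqrt γ by ring,
    le_div_iff₀ hsγ]
  linarith [hfinal]

/-- Convergence of square roots via Weierstrass approximation. -/
lemma aux_sqrt_conv (Cα : ℕ → F →L[ℂ] F) (C : F →L[ℂ] F)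
    (hCαpos : ∀ n, (0 : F →L[ℂ] F) ≤ Cα n) (hCpos : (0 : F →L[ℂ] F) ≤ C)
    (hconv : Tendsto (fun n => ‖Cα n - C‖) atTop (𝓝 0)) :
    Tendsto (fun n => ‖cfc Real.sqrt (Cα n) - cfc Real.sqrt C‖) atTop (𝓝 0) := by
  obtain hF | hF := subsingleton_or_nontrivial F
  · have : ∀ n, cfc Real.sqrt (Cα n) - cfc Real.sqrt C = 0 := fun n => Subsingleton.elim _ _
    simp only [this, norm_zero]
    exact tendsto_const_nhds
  rw [Metric.tendsto_atTop]
  intro ε hε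
  set K : ℝ := ‖C‖ + 1 with hK
  obtain ⟨p, hp⟩ := exists_polynomial_near_of_continuousOn 0 K Real.sqrt
    Real.continuous_sqrt.continuousOn (ε/3) (by positivity)
  have hcfcp : ∀ X : F →L[ℂ] F, 0 ≤ X → ‖X‖ ≤ K →
      ‖cfc Real.sqrt X - Polynomial.aeval X p‖ ≤ ε/3 := by
    intro X hX hXK
    have hXsa : IsSelfAdjoint X := .of_nonneg hX
    rw [← cfc_polynomial p X hXsa, ← cfc_sub Real.sqrt (fun x => p.eval x) X]
    refine norm_cfc_le (by positivity) fun x hx => ?_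
    have h0 : (0:ℝ) ≤ x := spectrum_nonneg_of_nonneg hX hx
    have h1 : x ≤ K := by
      have := spectrum.norm_le_norm_of_mem hx
      rw [Real.norm_eq_abs] at this
      exact (le_abs_self x).trans (this.trans hXK)
    have := hp x ⟨h0, h1⟩
    rw [Real.norm_eq_abs, abs_sub_comm]
    exact this.le
  have hCtend : Tendsto Cα atTop (𝓝 C) := by
    rwa [tendsto_iff_norm_sub_tendsto_zero]
  have htend : Tendsto (fun n => (Polynomial.aeval (Cα n) p : F →L[ℂ] F)) atTop
      (𝓝 (Polynomial.aeval C p)) :=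
    (p.continuous_aeval.tendsto C).comp hCtend
  have hev1 : ∀ᶠ n in atTop, ‖Cα n‖ ≤ K := by
    filter_upwards [hCtend.eventually (Metric.closedBall_mem_nhds C zero_lt_one)] with n hn
    rw [dist_eq_norm] at hn
    calc ‖Cα n‖ ≤ ‖Cα n - C‖ + ‖C‖ := by
          simpa using norm_add_le (Cα n - C) C
      _ ≤ K := by rw [hK]; linarith
  have hev2 : ∀ᶠ n in atTop, ‖Polynomial.aeval (Cα n) p - Polynomial.aeval C p‖ < ε/3 := by
    have h0 : Tendsto (fun n => ‖Polynomial.aeval (Cα n) p - Polynomial.aeval C p‖)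
        atTop (𝓝 0) := by rwa [← tendsto_iff_norm_sub_tendsto_zero]
    exact h0.eventually (gt_mem_nhds (by positivity))
  obtain ⟨N, hN⟩ := (hev1.and hev2).exists_forall_of_atTop
  refine ⟨N, fun n hn => ?_⟩
  obtain ⟨h1, h2⟩ := hN n hn
  rw [Real.dist_eq, sub_zero, abs_of_nonneg (norm_nonneg _)]
  have hdec : cfc Real.sqrt (Cα n) - cfc Real.sqrt C
      = (cfc Real.sqrt (Cα n) - Polynomial.aeval (Cα n) p)
        + (Polynomial.aeval (Cα n) p - Polynomial.aeval C p)
        + (Polynomial.aeval C p - cfc Real.sqrt C) := by abel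
  have t1 : ‖cfc Real.sqrt (Cα n) - Polynomial.aeval (Cα n) p‖ ≤ ε/3 :=
    hcfcp (Cα n) (hCαpos n) h1
  have t3 : ‖Polynomial.aeval C p - cfc Real.sqrt C‖ ≤ ε/3 := by
    rw [norm_sub_rev]
    exact hcfcp C hCpos (by rw [hK]; linarith)
  calc ‖cfc Real.sqrt (Cα n) - cfc Real.sqrt C‖
      ≤ ‖cfc Real.sqrt (Cα n) - Polynomial.aeval (Cα n) p‖
        + ‖Polynomial.aeval (Cα n) p - Polynomial.aeval C p‖
        + ‖Polynomial.aeval C p - cfc Real.sqrt C‖ := by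
        rw [hdec]; exact norm_add₃_le
    _ < ε := by linarith

/-- Identification of an abstract positive square root with the CFC square root. -/
lemma aux_sqrt_id (R C : F →L[ℂ] F) (hRpos : R.IsPositive) (hRC : R ∘L R = C)
    (hCpos : (0 : F →L[ℂ] F) ≤ C) : R = cfc Real.sqrt C := by
  have h1 : CFC.sqrt C = R := CFC.sqrt_unique hRC ((nonneg_iff_isPositive R).mpr hRpos)
  have h2 : CFC.sqrt C = cfc Real.sqrt C := by
    refine CFC.sqrt_unique ?_ (cfc_nonneg fun x _ => Real.sqrt_nonneg x)
    rw [← cfc_mul ..]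
    rw [cfc_congr (f := fun x : ℝ => Real.sqrt x * Real.sqrt x) (g := fun x : ℝ => x)
       (fun x hx => Real.mul_self_sqrt (spectrum_nonneg_of_nonneg hCpos hx))]
    exact cfc_id' ℝ C
  rw [← h1, h2]

end Aux

/-- If `C^α, C` are positive definite with common lower bound `γ > 0`,
`C^α → C` in norm, and `P^α_s, P_s` are the orthogonal projections onto `√C^α(F_s)`,
`√C(F_s)` for a closed subspace `F_s`, then `P^α_s → P_s` in operator norm (hence
strongly). -/
theorem stmt_12
    {F : Type*} [NormedAddCommGroup F] [InnerProductSpace ℂ F] [CompleteSpace F]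
    (γ : ℝ) (hγ : 0 < γ) (Cα : ℕ → F →L[ℂ] F) (C : F →L[ℂ] F)
    (hCαsa : ∀ n, IsSelfAdjoint (Cα n)) (hCsa : IsSelfAdjoint C)
    (hCα : ∀ n, ∀ f : F, γ * ‖f‖^2 ≤ (⟪(Cα n) f, f⟫_ℂ).re)
    (hC : ∀ f : F, γ * ‖f‖^2 ≤ (⟪C f, f⟫_ℂ).re)
    (hconv : Tendsto (fun n => ‖Cα n - C‖) atTop (𝓝 0))
    (Rα : ℕ → F →L[ℂ] F) (R : F →L[ℂ] F)
    (hRα : ∀ n, (Rα n).IsPositive) (hRαC : ∀ n, Rα n ∘L Rα n = Cα n)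
    (hR : R.IsPositive) (hRC : R ∘L R = C)
    (Fs : Submodule ℂ F) (hFs : IsClosed (Fs : Set F))
    (Pα : ℕ → F →L[ℂ] F) (P : F →L[ℂ] F)
    (hPα : ∀ n, ∀ f : F, Pα n f ∈ Fs.map ((Rα n) : F →ₗ[ℂ] F) ∧
      f - Pα n f ∈ (Fs.map ((Rα n) : F →ₗ[ℂ] F))ᗮ)
    (hP : ∀ f : F, P f ∈ Fs.map (R : F →ₗ[ℂ] F) ∧
      f - P f ∈ (Fs.map (R : F →ₗ[ℂ] F))ᗮ) :
    Tendsto (fun n => ‖Pα n - P‖) atTop (𝓝 0) := by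
  -- positivity of C and Cα in the Loewner order
  have hCpos : (0 : F →L[ℂ] F) ≤ C := by
    have h := star_mul_self_nonneg R
    rw [hR.isSelfAdjoint.star_eq] at h
    rw [← hRC]
    exact h
  have hCαpos : ∀ n, (0 : F →L[ℂ] F) ≤ Cα n := fun n => by
    have h := star_mul_self_nonneg (Rα n)
    rw [(hRα n).isSelfAdjoint.star_eq] at h
    rw [← hRαC n]
    exact h
  -- identify the square roots with CFC square roots and get norm convergence
  have hRid : R = cfc Real.sqrt C := aux_sqrt_id R C hR hRC hCpos
  have hRαid : ∀ n, Rα n = cfc Real.sqrt (Cα n) := fun n =>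
    aux_sqrt_id (Rα n) (Cα n) (hRα n) (hRαC n) (hCαpos n)
  have hRconv : Tendsto (fun n => ‖Rα n - R‖) atTop (𝓝 0) := by
    have := aux_sqrt_conv Cα C hCαpos hCpos hconv
    convert this using 2 with n
    rw [hRid, hRαid n]
  -- lower bounds for the square roots
  have hRlow : ∀ x : F, Real.sqrt γ * ‖x‖ ≤ ‖R x‖ := aux_low hγ R C hR.isSelfAdjoint hRC hC
  have hRαlow : ∀ n, ∀ x : F, Real.sqrt γ * ‖x‖ ≤ ‖Rα n x‖ := fun n =>
    aux_low hγ (Rα n) (Cα n) (hRα n).isSelfAdjoint (hRαC n) (hCα n)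
  -- key estimate
  have hbound : ∀ n, ‖Pα n - P‖ ≤ 2 / Real.sqrt γ * ‖Rα n - R‖ := fun n =>
    aux_proj_bound hγ (Rα n) R (hRαlow n) hRlow Fs (Pα n) P (hPα n) hP
  have hlim : Tendsto (fun n => 2 / Real.sqrt γ * ‖Rα n - R‖) atTop (𝓝 0) := by
    simpa using hRconv.const_mul (2 / Real.sqrt γ)
  exact squeeze_zero (fun n => norm_nonneg _) hbound hlim
end
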